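/- For every n ≥ 2 and every integer c with 1 ≤ c ≤ n − 1, there exist rooted binary trees S and T each with n vertices such that the chain distance satisfies C(S,T) = n − c. -/
import Mathlib


/-- Rooted binary trees with vertices labeled by `α`: each vertex has an optional
left child and an optional right child; `nil` denotes the absent (empty) tree. -/
inductive BT (α : Type) : Type
  | nil : BT α
  | node : BT α → α → BT α → BT α

namespace BT

variable {α : Type}

/-- The number of vertices of a tree. -/
def size : BT α → ℕ
  | nil => 0
  | node l _ r => size l + size r + 1

/-- The in-order (infix) traversal sequence of the labels of a tree:
left subtree first, then the root, then the right subtree. -/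
def inorder : BT α → List α
  | nil => []
  | node l x r => inorder l ++ x :: inorder r

/-- The number of vertices of the tree having a (non-null) right child. -/
def rightChildCount : BT α → ℕ
  | nil => 0
  | node l _ nil => rightChildCount l
  | node l _ (node rl y rr) => rightChildCount l + rightChildCount (node rl y rr) + 1

/-- The number of vertices of the tree having a (non-null) left child. -/
def leftChildCount : BT α → ℕ
  | nil => 0
  | node nil _ r => leftChildCount r
  | node (node ll y lr) _ r => leftChildCount (node ll y lr) + leftChildCount r + 1

/-- `L T`: the number of maximal left chains of `T`.  A left chain is a sequence of
vertices each linked to the next by a left-child pointer (a single vertex is a chain);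
a maximal left chain is one not contained in any other left chain.  Each maximal left
chain is uniquely determined by its topmost vertex, which is either the root of the
tree or a right child of some vertex; moreover the maximal left chain headed by the
root of a nonempty left subtree `l` merges with its parent, which yields the
recursion below. -/
def L : BT α → ℕ
  | nil => 0
  | node nil _ r => 1 + L r
  | node (node ll y lr) _ r => L (node ll y lr) + L r

/-- `R T`: the number of maximal right chains of `T` (mirror image of `L`). -/
def R : BT α → ℕ
  | nil => 0
  | node l _ nil => R l + 1
  | node l _ (node rl y rr) => R l + R (node rl y rr)

/-- The complete left chain on `n` vertices: the tree in which all `n` vertices are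
linked by left-child pointers. -/
def leftChain : ℕ → BT Unit
  | 0 => nil
  | n + 1 => node (leftChain n) () nil

/-- The complete right chain on `n` vertices: the tree in which all `n` vertices are
linked by right-child pointers. -/
def rightChain : ℕ → BT Unit
  | 0 => nil
  | n + 1 => node nil () (rightChain n)

/-- `SpliceL A w U V lv` captures the local effect of the direct chain rotation
`rot([u-v], w)` for a **left** chain `[u-v]`: here `U` is the subtree rooted at `u`
(`u` being the right child of `w`), `A` is the left subtree of `w` and `w` is its
label, `[u-v]` is the left chain going from `u` down (along left-child pointers) to
`v` inside `U`, `lv` is the former left subtree of `v`, and `V` is the tree replacing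
the subtree `node A w U` rooted at `w`: the vertex `u` takes the place of `w`, `w`
becomes the left child of `v`, and the former left subtree `lv` of `v` (if any)
becomes the right subtree of `w`.  The chain `[u-v]` is maximal iff `lv = nil`. -/
inductive SpliceL (A : BT α) (w : α) : BT α → BT α → BT α → Prop
  | base (lv rv : BT α) (v : α) :
      SpliceL A w (node lv v rv) (node (node A w lv) v rv) lv
  | step {lu lu' lv : BT α} (c : α) (ru : BT α) :
      SpliceL A w lu lu' lv → SpliceL A w (node lu c ru) (node lu' c ru) lv

/-- `SpliceR A w U V rv`: mirror image of `SpliceL`, i.e. the local effect of the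
direct chain rotation `rot([u-v], w)` for a **right** chain `[u-v]`: `U` is the
subtree rooted at `u` (`u` being the left child of `w`), `A` is the right subtree of
`w`, `[u-v]` is the right chain from `u` down to `v` inside `U`, `rv` is the former
right subtree of `v`, and `V` replaces the subtree `node U w A` rooted at `w`: `u`
takes the place of `w`, `w` becomes the right child of `v`, and the former right
subtree `rv` of `v` (if any) becomes the left subtree of `w`.
The chain `[u-v]` is maximal iff `rv = nil`. -/
inductive SpliceR (A : BT α) (w : α) : BT α → BT α → BT α → Prop
  | base (lv rv : BT α) (v : α) :
      SpliceR A w (node lv v rv) (node lv v (node rv w A)) rv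
  | step {ru ru' rv : BT α} (lu : BT α) (c : α) :
      SpliceR A w ru ru' rv → SpliceR A w (node lu c ru) (node lu c ru') rv

/-- `Ctx Y Y' W W'`: the tree `Y'` is obtained from `Y` by replacing one occurrence
of the subtree `W`, rooted at some vertex of `Y` (or `Y` itself), by the tree `W'`. -/
inductive Ctx : BT α → BT α → BT α → BT α → Prop
  | refl (W W' : BT α) : Ctx W W' W W'
  | left {l l' W W' : BT α} (x : α) (r : BT α) :
      Ctx l l' W W' → Ctx (node l x r) (node l' x r) W W'
  | right {r r' W W' : BT α} (l : BT α) (x : α) :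
      Ctx r r' W W' → Ctx (node l x r) (node l x r') W W'

/-- `Y'` is obtained from `Y` by one **direct** chain rotation `rot([u-v], w)`,
performed either on a left chain or (symmetrically) on a right chain, at an arbitrary
vertex `w` of `Y`. -/
def DirectRot (Y Y' : BT α) : Prop :=
  (∃ A w U V lv, SpliceL A w U V lv ∧ Ctx Y Y' (node A w U) V) ∨
  (∃ A w U V rv, SpliceR A w U V rv ∧ Ctx Y Y' (node U w A) V)

/-- `IChainL A w B X X'` captures the data of the inverse chain rotation
`rot(w, [u-v])` for a **left** chain `[u-v]`: `X` is the subtree rooted at `u`,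
`[u-v]` is the left chain from `u` down to `v` inside `X`, and the vertex `w` (with
label `w`, left subtree `A` and right subtree `B`) is the left child of `v`; `X'` is
`X` with the left child `w` of `v` replaced by `B` (the former right subtree of `w`
becomes the left subtree of `v`).  The rotation replaces the subtree `X` by
`node A w X'`: `w` takes the place of `u` and `u` becomes the right child of `w`. -/
inductive IChainL (A : BT α) (w : α) (B : BT α) : BT α → BT α → Prop
  | base (v : α) (rv : BT α) :
      IChainL A w B (node (node A w B) v rv) (node B v rv)
  | step {lu lu' : BT α} (c : α) (ru : BT α) :
      IChainL A w B lu lu' → IChainL A w B (node lu c ru) (node lu' c ru)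

/-- `IChainR B w A X X'`: mirror image of `IChainL`, for the inverse chain rotation
`rot(w, [u-v])` on a **right** chain `[u-v]`: `X` is the subtree rooted at `u`, the
vertex `w` (with left subtree `B` and right subtree `A`) is the right child of `v`;
`X'` is `X` with the right child `w` of `v` replaced by `B`.  The rotation replaces
`X` by `node X' w A`: `w` takes the place of `u` and `u` becomes the left child
of `w`. -/
inductive IChainR (B : BT α) (w : α) (A : BT α) : BT α → BT α → Prop
  | base (v : α) (lv : BT α) :
      IChainR B w A (node lv v (node B w A)) (node lv v B)
  | step {ru ru' : BT α} (lu : BT α) (c : α) :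
      IChainR B w A ru ru' → IChainR B w A (node lu c ru) (node lu c ru')

/-- `Y'` is obtained from `Y` by one **inverse** chain rotation `rot(w, [u-v])`,
performed either on a left chain or (symmetrically) on a right chain, anywhere
in `Y`. -/
def InvRot (Y Y' : BT α) : Prop :=
  (∃ A w B X X', IChainL A w B X X' ∧ Ctx Y Y' X (node A w X')) ∨
  (∃ B w A X X', IChainR B w A X X' ∧ Ctx Y Y' X (node X' w A))

/-- One chain rotation (c-rotation), direct or inverse. -/
def CStep (Y Y' : BT α) : Prop := DirectRot Y Y' ∨ InvRot Y Y'

/-- `ReachIn k S T`: `S` can be transformed into `T` by a sequence of exactly `k`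
chain rotations (each direct or inverse). -/
def ReachIn : ℕ → BT α → BT α → Prop
  | 0 => fun S T => S = T
  | k + 1 => fun S T => ∃ Y, CStep S Y ∧ ReachIn k Y T

/-- `DReachIn k S T`: `S` can be transformed into `T` by a sequence of exactly `k`
**direct** chain rotations. -/
def DReachIn : ℕ → BT α → BT α → Prop
  | 0 => fun S T => S = T
  | k + 1 => fun S T => ∃ Y, DirectRot S Y ∧ DReachIn k Y T

/-- The chain distance `C(S,T)`: the minimum number of chain rotations (direct or
inverse) needed to transform `S` into `T`. -/
noncomputable def chainDist (S T : BT α) : ℕ := sInf {k | ReachIn k S T}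

end BT
namespace BT

variable {α : Type}

lemma R_nil : R (nil : BT α) = 0 := rfl

lemma one_le_R : ∀ (l : BT α) (x : α) (r : BT α), 1 ≤ R (node l x r)
  | l, x, nil => by simp [R]
  | l, x, node a b c => by simp only [R]; have := one_le_R a b c; omega

lemma R_pos {t : BT α} (h : t ≠ nil) : 1 ≤ R t := by
  cases t with
  | nil => exact absurd rfl h
  | node l x r => exact one_le_R l x r

lemma R_node (l : BT α) (x : α) (r : BT α) : R (node l x r) = R l + max 1 (R r) := by
  cases r with
  | nil => simp [R]
  | node a b c => simp only [R]; have := one_le_R a b c; omega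

lemma spliceL_ne {A : BT α} {w : α} {U V lv : BT α} (h : SpliceL A w U V lv) :
    U ≠ nil ∧ V ≠ nil := by
  cases h with
  | base lv rv v => exact ⟨by simp, by simp⟩
  | step c ru h => exact ⟨by simp, by simp⟩

lemma spliceR_ne {A : BT α} {w : α} {U V rv : BT α} (h : SpliceR A w U V rv) :
    U ≠ nil ∧ V ≠ nil := by
  cases h with
  | base lv rv v => exact ⟨by simp, by simp⟩
  | step lu c h => exact ⟨by simp, by simp⟩

lemma spliceL_R {A : BT α} {w : α} {U V lv : BT α} (h : SpliceL A w U V lv) :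
    R A + R U ≤ R V ∧ R V ≤ R A + R U + 1 := by
  induction h with
  | base lv rv v => rw [R_node, R_node, R_node]; omega
  | step c ru h ih =>
      rename_i lu lu' lv'
      have h1 := R_pos (spliceL_ne h).1
      have h2 := R_pos (spliceL_ne h).2
      rw [R_node, R_node]; omega

lemma spliceR_R {A : BT α} {w : α} {U V rv : BT α} (h : SpliceR A w U V rv) :
    R V ≤ R U + max 1 (R A) ∧ R U + max 1 (R A) ≤ R V + 1 := by
  induction h with
  | base lv rv v => rw [R_node, R_node, R_node]; omega
  | step lu c h ih =>
      rename_i ru ru' rv'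
      have h1 := R_pos (spliceR_ne h).1
      have h2 := R_pos (spliceR_ne h).2
      rw [R_node, R_node]; omega

lemma ctx_ne_nil {Y Y' W W' : BT α} (h : Ctx Y Y' W W') :
    (W ≠ nil → Y ≠ nil) ∧ (W' ≠ nil → Y' ≠ nil) := by
  induction h with
  | refl W W' => exact ⟨id, id⟩
  | left x r h ih => exact ⟨fun _ => by simp, fun _ => by simp⟩
  | right l x h ih => exact ⟨fun _ => by simp, fun _ => by simp⟩

lemma ctx_R {Y Y' W W' : BT α} (h : Ctx Y Y' W W') :
    W ≠ nil → W' ≠ nil → R Y + R W' = R Y' + R W := by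
  induction h with
  | refl W W' => intro _ _; omega
  | left x r h ih =>
      intro hW hW'
      have := ih hW hW'
      rw [R_node, R_node]; omega
  | right l x h ih =>
      intro hW hW'
      rename_i r r' _ _
      have := ih hW hW'
      have hr := R_pos ((ctx_ne_nil h).1 hW)
      have hr' := R_pos ((ctx_ne_nil h).2 hW')
      rw [R_node, R_node]; omega

lemma ichainL_spliceL {A : BT α} {w : α} {B X X' : BT α} (h : IChainL A w B X X') :
    SpliceL A w X' X B := by
  induction h with
  | base v rv => exact SpliceL.base B rv v
  | step c ru h ih => exact SpliceL.step c ru ih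

lemma ichainR_spliceR {B : BT α} {w : α} {A X X' : BT α} (h : IChainR B w A X X') :
    SpliceR A w X' X B := by
  induction h with
  | base v lv => exact SpliceR.base lv B v
  | step lu c h ih => exact SpliceR.step lu c ih

lemma cstep_R {Y Y' : BT α} (h : CStep Y Y') : R Y' ≤ R Y + 1 ∧ R Y ≤ R Y' + 1 := by
  rcases h with (⟨A, w, U, V, lv, hs, hc⟩ | ⟨A, w, U, V, rv, hs, hc⟩) |
    (⟨A, w, B, X, X', hi, hc⟩ | ⟨B, w, A, X, X', hi, hc⟩)
  · have hU := R_pos (spliceL_ne hs).1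
    have hV := (spliceL_ne hs).2
    have hcr := ctx_R hc (by simp) hV
    have hsr := spliceL_R hs
    rw [R_node] at hcr; omega
  · have hU := R_pos (spliceR_ne hs).1
    have hV := (spliceR_ne hs).2
    have hcr := ctx_R hc (by simp) hV
    have hsr := spliceR_R hs
    rw [R_node] at hcr; omega
  · have hs := ichainL_spliceL hi
    have hX := (spliceL_ne hs).2
    have hX' := R_pos (spliceL_ne hs).1
    have hcr := ctx_R hc hX (by simp)
    have hsr := spliceL_R hs
    rw [R_node] at hcr; omega
  · have hs := ichainR_spliceR hi
    have hX := (spliceR_ne hs).2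
    have hX' := R_pos (spliceR_ne hs).1
    have hcr := ctx_R hc hX (by simp)
    have hsr := spliceR_R hs
    rw [R_node] at hcr; omega

lemma reachIn_R : ∀ (k : ℕ) (S T : BT α), ReachIn k S T → R T ≤ R S + k ∧ R S ≤ R T + k
  | 0, S, T, h => by cases h; omega
  | k + 1, S, T, h => by
      obtain ⟨Y, h1, h2⟩ := h
      have := cstep_R h1
      have := reachIn_R k Y T h2
      omega

lemma size_leftChain (m : ℕ) : size (leftChain m) = m := by
  induction m with
  | zero => rfl
  | succ m ih => simp [leftChain, size, ih]

lemma size_rightChain (m : ℕ) : size (rightChain m) = m := by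
  induction m with
  | zero => rfl
  | succ m ih => simp [rightChain, size, ih]

lemma R_leftChain (m : ℕ) : R (leftChain m) = m := by
  induction m with
  | zero => rfl
  | succ m ih => simp only [leftChain, R_node, ih, R_nil]; omega

lemma R_rightChain_le (m : ℕ) : R (rightChain m) ≤ 1 := by
  induction m with
  | zero => simp [rightChain, R]
  | succ m ih => rw [rightChain, R_node]; simp [R]; omega

lemma reach_upper : ∀ (k j m : ℕ),
    ReachIn k (node (leftChain j) () (rightChain (m + k)))
      (node (leftChain (j + k)) () (rightChain m)) := by
  intro k
  induction k with
  | zero => intro j m; rfl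
  | succ k ih =>
      intro j m
      refine ⟨node (leftChain (j + 1)) () (rightChain (m + k)), ?_, ?_⟩
      · left; left
        exact ⟨leftChain j, (), node nil () (rightChain (m + k)),
          node (node (leftChain j) () nil) () (rightChain (m + k)), nil,
          SpliceL.base nil (rightChain (m + k)) (), Ctx.refl _ _⟩
      · have := ih (j + 1) m
        have e : j + 1 + k = j + (k + 1) := by omega
        rwa [e] at this

end BT

open BT

/-- for every `n ≥ 2` and every integer `c` with `1 ≤ c ≤ n − 1`, there
exist rooted binary trees `S` and `T`, each with `n` vertices, whose chain distance
is exactly `n − c`. -/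
theorem exists_trees_with_chainDist (n c : ℕ) (hn : 2 ≤ n) (hc1 : 1 ≤ c)
    (hc2 : c ≤ n - 1) :
    ∃ S T : BT Unit, S.size = n ∧ T.size = n ∧ chainDist S T = n - c := by
  set k := n - c with hk
  refine ⟨rightChain n, node (leftChain k) () (rightChain (c - 1)), size_rightChain n, ?_, ?_⟩
  · simp [size, size_leftChain, size_rightChain]; omega
  · have hreach : ReachIn k (rightChain n) (node (leftChain k) () (rightChain (c - 1))) := by
      have := reach_upper k 0 (c - 1)
      have e1 : c - 1 + k = n - 1 := by omega
      have e2 : (0 : ℕ) + k = k := by omega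
      rw [e1, e2] at this
      have e3 : n = (n - 1) + 1 := by omega
      rw [e3, rightChain]
      exact this
    have hRS : R (rightChain n) = 1 := by
      have e3 : n = (n - 1) + 1 := by omega
      rw [e3, rightChain, R_node]
      have := R_rightChain_le (n - 1)
      simp [R]; omega
    have hRT : R (node (leftChain k) () (rightChain (c - 1))) = k + 1 := by
      rw [R_node, R_leftChain]
      have := R_rightChain_le (c - 1)
      omega
    have hlow : ∀ m, ReachIn m (rightChain n) (node (leftChain k) () (rightChain (c - 1))) → k ≤ m := by
      intro m hm
      have := reachIn_R m _ _ hm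
      omega
    have hne : {m | ReachIn m (rightChain n) (node (leftChain k) () (rightChain (c - 1)))}.Nonempty :=
      ⟨k, hreach⟩
    exact le_antisymm (Nat.sInf_le hreach) (hlow _ (Nat.sInf_mem hne))
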